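/- arXiv:1010.5455 — 2 statements merged into one kernel-verified Lean document; each statement's English description precedes it below -/
import Mathlib

section
/- Let a ∈ ℝᵐ, s > 0, and let u be a map from an open subset of ℝⁿ to ℝᵐ differentiable at a point x with |u(x) − a| > s. Define v = a + s·(u − a)/|u − a| on a neighborhood of x (the radial truncation of u onto the sphere of radius s about a). Then v is differentiable at x and ‖Dv(x)‖ ≤ ‖Du(x)‖, where ‖·‖ denotes the Hilbert–Schmidt (Frobenius) norm; more precisely ‖Dv(x)‖² = s²·‖Dn(x)‖² ≤ |u(x) − a|²·‖Dn(x)‖² ≤ ‖Du(x)‖², with n = (u − a)/|u − a|. -/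
open MeasureTheory Set
open scoped RealInnerProductSpace

/-- Hilbert–Schmidt (Frobenius) norm of a linear map between Euclidean spaces. -/
noncomputable def hsNorm {n m : ℕ}
    (L : EuclideanSpace ℝ (Fin n) →L[ℝ] EuclideanSpace ℝ (Fin m)) : ℝ :=
  Real.sqrt (∑ i : Fin n, ‖L (EuclideanSpace.single i 1)‖ ^ 2)

/-- The energy functional `J_Ω(v) = ∫_Ω ((1/2)‖Dv‖² + W(v)) dx`. -/
noncomputable def energy {n m : ℕ} (Ω : Set (EuclideanSpace ℝ (Fin n)))
    (W : EuclideanSpace ℝ (Fin m) → ℝ)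
    (v : EuclideanSpace ℝ (Fin n) → EuclideanSpace ℝ (Fin m)) : ℝ :=
  ∫ x in Ω, ((1 / 2 : ℝ) * hsNorm (fderiv ℝ v x) ^ 2 + W (v x))

/-- Hypothesis (H): `a` is a global minimum of `W` with `W a = 0`, and for every
unit vector `w` the function `λ ↦ W (a + λ w)` is strictly increasing on `[0, r₀)`. -/
def HypH {m : ℕ} (W : EuclideanSpace ℝ (Fin m) → ℝ)
    (a : EuclideanSpace ℝ (Fin m)) (r₀ : ℝ) : Prop :=
  W a = 0 ∧ (∀ v, W a ≤ W v) ∧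
    ∀ w : EuclideanSpace ℝ (Fin m), ‖w‖ = 1 →
      StrictMonoOn (fun t : ℝ => W (a + t • w)) (Set.Ico (0 : ℝ) r₀)

/-- A set has Lipschitz boundary: uniform interior cone condition at every
boundary point (the standard equivalent of being locally the hypograph of a
Lipschitz function). -/
def HasLipschitzBoundary {n : ℕ} (s : Set (EuclideanSpace ℝ (Fin n))) : Prop :=
  ∀ x ∈ frontier s, ∃ ν : EuclideanSpace ℝ (Fin n), ∃ ε c : ℝ,
    ‖ν‖ = 1 ∧ 0 < ε ∧ 0 < c ∧
    ∀ y ∈ s ∩ Metric.ball x ε, ∀ t ∈ Set.Ioo (0 : ℝ) ε,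
      Metric.ball (y + t • ν) (c * t) ⊆ s

/-- `v` is differentiable almost everywhere on `Ω`. -/
def DiffAEOn {n m : ℕ} (Ω : Set (EuclideanSpace ℝ (Fin n)))
    (v : EuclideanSpace ℝ (Fin n) → EuclideanSpace ℝ (Fin m)) : Prop :=
  ∀ᵐ x ∂(volume.restrict Ω), DifferentiableAt ℝ v x

/-- The point of `ℝ²` (as Euclidean space) with coordinates `x₁, x₂`. -/
noncomputable def mk2 (x₁ x₂ : ℝ) : EuclideanSpace ℝ (Fin 2) := WithLp.toLp 2 ![x₁, x₂]

/-!
Write `u - a = ρ n` with `ρ = |u - a|` and `|n| = 1`. Differentiating `|n|² = 1` shows that every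
column of `Dn` is orthogonal to `n`, so `Du = ρ Dn + ∇ρ ⊗ n` is an orthogonal splitting and
`ρ ‖Dn‖ ≤ ‖Du‖` column by column. Since `Dv = s Dn` and `s < ρ`, the bound for `v` follows.
-/

section HilbertSchmidt

variable {n m : ℕ}

lemma hsNorm_nonneg (L : EuclideanSpace ℝ (Fin n) →L[ℝ] EuclideanSpace ℝ (Fin m)) :
    0 ≤ hsNorm L :=
  Real.sqrt_nonneg _

lemma hsNorm_smul (c : ℝ) (L : EuclideanSpace ℝ (Fin n) →L[ℝ] EuclideanSpace ℝ (Fin m)) :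
    hsNorm (c • L) = |c| * hsNorm L := by
  simp only [hsNorm, smul_apply, norm_smul, mul_pow, Real.norm_eq_abs,
    ← Finset.mul_sum]
  rw [Real.sqrt_mul (sq_nonneg _), Real.sqrt_sq_eq_abs, abs_abs]

lemma hsNorm_le_of_norm_apply_le {A B : EuclideanSpace ℝ (Fin n) →L[ℝ] EuclideanSpace ℝ (Fin m)}
    (h : ∀ e, ‖A e‖ ≤ ‖B e‖) : hsNorm A ≤ hsNorm B :=
  Real.sqrt_le_sqrt <| Finset.sum_le_sum fun _ _ =>
    pow_le_pow_left₀ (norm_nonneg _) (h _) 2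

end HilbertSchmidt

section Normalization

variable {E F : Type*} [NormedAddCommGroup E] [NormedSpace ℝ E]
  [NormedAddCommGroup F] [InnerProductSpace ℝ F] {w : E → F} {x : E}

lemma DifferentiableAt.inv_norm_smul (hw : DifferentiableAt ℝ w x) (h0 : w x ≠ 0) :
    DifferentiableAt ℝ (fun y => ‖w y‖⁻¹ • w y) x :=
  ((hw.norm ℝ h0).inv (norm_ne_zero_iff.mpr h0)).smul hw

lemma inner_fderiv_apply_eq_zero_of_eventually_norm_eq {f : E → F} {c : ℝ}
    (hf : DifferentiableAt ℝ f x) (hc : ∀ᶠ y in nhds x, ‖f y‖ = c) (e : E) :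
    ⟪f x, fderiv ℝ f x e⟫ = 0 := by
  have hconst : (fun y => ⟪f y, f y⟫) =ᶠ[nhds x] fun _ => c ^ 2 := by
    filter_upwards [hc] with y hy
    rw [real_inner_self_eq_norm_sq, hy]
  have hderiv := fderiv_inner_apply ℝ hf hf e
  rw [hconst.fderiv_eq, fderiv_const_apply, real_inner_comm (f x)] at hderiv
  simp only [zero_apply] at hderiv
  linarith

lemma eventually_norm_inv_norm_smul_eq_one {X : Type*} [TopologicalSpace X] {g : X → F} {p : X}
    (hg : ContinuousAt g p) (h0 : g p ≠ 0) : ∀ᶠ y in nhds p, ‖‖g y‖⁻¹ • g y‖ = 1 := by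
  filter_upwards [hg.eventually_ne h0] with y hy
  rw [norm_smul, norm_inv, norm_norm, inv_mul_cancel₀ (norm_ne_zero_iff.mpr hy)]

lemma fderiv_apply_eq_norm_smul_add_smul (hw : DifferentiableAt ℝ w x) (h0 : w x ≠ 0) (e : E) :
    fderiv ℝ w x e = ‖w x‖ • fderiv ℝ (fun y => ‖w y‖⁻¹ • w y) x e
      + fderiv ℝ (fun y => ‖w y‖) x e • (‖w x‖⁻¹ • w x) := by
  have hpolar : w =ᶠ[nhds x] fun y => ‖w y‖ • (‖w y‖⁻¹ • w y) := by
    filter_upwards [hw.continuousAt.eventually_ne h0] with y hy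
    rw [smul_smul, mul_inv_cancel₀ (norm_ne_zero_iff.mpr hy), one_smul]
  rw [hpolar.fderiv_eq, fderiv_fun_smul (hw.norm ℝ h0) (hw.inv_norm_smul h0)]
  rfl

lemma norm_mul_norm_fderiv_inv_norm_smul_le (hw : DifferentiableAt ℝ w x) (h0 : w x ≠ 0) (e : E) :
    ‖w x‖ * ‖fderiv ℝ (fun y => ‖w y‖⁻¹ • w y) x e‖ ≤ ‖fderiv ℝ w x e‖ := by
  set N := fderiv ℝ (fun y => ‖w y‖⁻¹ • w y) x e
  set r := fderiv ℝ (fun y => ‖w y‖) x e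
  have horth : ⟪‖w x‖ • N, r • (‖w x‖⁻¹ • w x)⟫ = 0 := by
    rw [real_inner_smul_left, real_inner_smul_right, real_inner_comm,
      inner_fderiv_apply_eq_zero_of_eventually_norm_eq (hw.inv_norm_smul h0)
        (eventually_norm_inv_norm_smul_eq_one hw.continuousAt h0) e]
    ring
  have hpyth := norm_add_sq_eq_norm_sq_add_norm_sq_real horth
  rw [fderiv_apply_eq_norm_smul_add_smul hw h0 e, ← norm_smul_of_nonneg (norm_nonneg _)]
  exact (mul_self_le_mul_self_iff (norm_nonneg _) (norm_nonneg _)).mpr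
    (hpyth ▸ le_add_of_nonneg_right (mul_self_nonneg _))

end Normalization

theorem radial_truncation_gradient_bound
    {n m : ℕ} (a : EuclideanSpace ℝ (Fin m)) (s : ℝ) (hs : 0 < s)
    (u : EuclideanSpace ℝ (Fin n) → EuclideanSpace ℝ (Fin m))
    (x : EuclideanSpace ℝ (Fin n))
    (hu : DifferentiableAt ℝ u x)
    (hgt : s < ‖u x - a‖)
    (nvec : EuclideanSpace ℝ (Fin n) → EuclideanSpace ℝ (Fin m))
    (hnvec : nvec = fun y => ‖u y - a‖⁻¹ • (u y - a))
    (v : EuclideanSpace ℝ (Fin n) → EuclideanSpace ℝ (Fin m))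
    (hv : v = fun y => a + s • nvec y) :
    DifferentiableAt ℝ v x ∧
    hsNorm (fderiv ℝ v x) ≤ hsNorm (fderiv ℝ u x) ∧
    hsNorm (fderiv ℝ v x) ^ 2 = s ^ 2 * hsNorm (fderiv ℝ nvec x) ^ 2 ∧
    s ^ 2 * hsNorm (fderiv ℝ nvec x) ^ 2 ≤
      ‖u x - a‖ ^ 2 * hsNorm (fderiv ℝ nvec x) ^ 2 ∧
    ‖u x - a‖ ^ 2 * hsNorm (fderiv ℝ nvec x) ^ 2 ≤ hsNorm (fderiv ℝ u x) ^ 2 := by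
  have h0 : u x - a ≠ 0 := norm_pos_iff.mp (hs.trans hgt)
  have hw : DifferentiableAt ℝ (fun y => u y - a) x := hu.sub_const a
  have hn : DifferentiableAt ℝ nvec x := hnvec ▸ hw.inv_norm_smul h0
  have hv' : fderiv ℝ v x = s • fderiv ℝ nvec x := by
    rw [hv, fderiv_const_add, fderiv_fun_const_smul hn]
  have hscale : hsNorm (fderiv ℝ v x) ^ 2 = s ^ 2 * hsNorm (fderiv ℝ nvec x) ^ 2 := by
    rw [hv', hsNorm_smul, mul_pow, sq_abs]
  have hradius : s ^ 2 * hsNorm (fderiv ℝ nvec x) ^ 2 ≤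
      ‖u x - a‖ ^ 2 * hsNorm (fderiv ℝ nvec x) ^ 2 :=
    mul_le_mul_of_nonneg_right (pow_le_pow_left₀ hs.le hgt.le 2) (sq_nonneg _)
  have hpolar : ‖u x - a‖ ^ 2 * hsNorm (fderiv ℝ nvec x) ^ 2 ≤ hsNorm (fderiv ℝ u x) ^ 2 := by
    rw [← mul_pow, ← abs_norm (u x - a), ← hsNorm_smul, ← fderiv_sub_const (f := u) a]
    refine pow_le_pow_left₀ (hsNorm_nonneg _) (hsNorm_le_of_norm_apply_le fun e => ?_) 2
    rw [smul_apply, norm_smul, norm_norm, hnvec]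
    exact norm_mul_norm_fderiv_inv_norm_smul_le hw h0 e
  refine ⟨hv ▸ (hn.const_smul s).const_add a, ?_, hscale, hradius, hpolar⟩
  exact (pow_le_pow_iff_left₀ (hsNorm_nonneg _) (hsNorm_nonneg _) two_ne_zero).mp
    (hscale.trans_le (hradius.trans hpolar))
end

section
/- Let a ∈ ℝ², r > 0, C > 0, w₀ > 0, μ > 0, R > 0, and let W : ℝ² → ℝ be a nonnegative continuous potential such that W(v) ≥ w₀ whenever |v − a| ≥ r/4 and v lies in the closed right half-plane {v₁ ≥ 0}. Let Ω = (0, μR) × (−R, R) and let u : cl(Ω) → ℝ² be C¹ with u₁ ≥ 0 on Ω and with energy J_Ω(u) = ∫_Ω ( (1/2)‖Du‖² + W(u) ) dx ≤ CR. Define i_R = { x₁ ∈ (0, μR) : ∃ x₂ ∈ (−R, R) with |u(x₁, x₂) − a| ≥ r/2 }. Then there exists R₀ > 0, depending only on r and w₀ (one may take R₀ = r/(4√(2w₀))), such that for all R ≥ R₀ the one-dimensional Lebesgue measure of i_R satisfies |i_R| ≤ 2√2·C·R/(r·√(w₀)); consequently, if moreover μ > η₀ := 2√2·C/(r·√(w₀)),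 there exists x̄₁ ∈ (0, μR) with x̄₁ ≤ η₀R such that |u(x̄₁, x₂) − a| < r/2 for all x₂ ∈ (−R, R). -/
open MeasureTheory Set

open Filter Topology

/-
By Fubini, the energy bounds the integral over `x₁ ∈ (0, μR)` of the energies of the vertical
columns. On a column meeting the bad set, the curve `x₂ ↦ u(x₁, x₂)` either stays at distance
`≥ r/4` from `a`, paying `w₀` per unit length, or it travels from distance `r/4` to distance `r/2`
inside the region where `W ≥ w₀`, paying at least `√(2w₀) · r/4` by the Modica–Mortola inequality
`√(2w₀)|φ'| ≤ |φ'|²/2 + W(φ)`. For `R ≥ R₀` both alternatives cost at least `κ = r√(2w₀)/4`, so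
Markov's inequality gives `|i_R| ≤ CR/κ = η₀R`. This bound alone does not exclude that all of
`(0, η₀R]` is bad; but then, by continuity, the columns just to the right of `η₀R` are still
nearly bad, and their extra energy pushes the total above `CR`.
-/

lemma mul_measure_le_setLIntegral {α : Type*} [MeasurableSpace α] {μ : Measure α}
    {s : Set α} {f : α → ENNReal} {c : ENNReal} (hs : MeasurableSet s)
    (hf : ∀ x ∈ s, c ≤ f x) : c * μ s ≤ ∫⁻ x in s, f x ∂μ :=
  (setLIntegral_const s c).symm.trans_le (setLIntegral_mono' hs hf)

lemma mul_measure_add_mul_measure_le_setLIntegral {α : Type*} [MeasurableSpace α]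
    {μ : Measure α} {f : α → ENNReal} {A B s : Set α} {c c' : ENNReal} (hA : MeasurableSet A)
    (hB : MeasurableSet B) (hAB : Disjoint A B) (hs : A ∪ B ⊆ s) (hfA : ∀ x ∈ A, c ≤ f x)
    (hfB : ∀ x ∈ B, c' ≤ f x) : c * μ A + c' * μ B ≤ ∫⁻ x in s, f x ∂μ :=
  calc c * μ A + c' * μ B ≤ ∫⁻ x in A, f x ∂μ + ∫⁻ x in B, f x ∂μ :=
        add_le_add (mul_measure_le_setLIntegral hA hfA) (mul_measure_le_setLIntegral hB hfB)
    _ = ∫⁻ x in A ∪ B, f x ∂μ := (lintegral_union hB hAB).symm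
    _ ≤ _ := lintegral_mono_set hs

lemma measure_le_of_le_setLIntegral {α : Type*} [MeasurableSpace α] {μ : Measure α}
    {f : α → ENNReal} {s A : Set α} {c M : ℝ} (hs : MeasurableSet s)
    (hf : AEMeasurable f (μ.restrict s)) (hc : 0 < c) (hA : A ⊆ s)
    (hfA : ∀ x ∈ A, ENNReal.ofReal c ≤ f x) (hM : ∫⁻ x in s, f x ∂μ ≤ ENNReal.ofReal (c * M)) :
    μ A ≤ ENNReal.ofReal M := by
  refine (ENNReal.mul_le_mul_iff_right (by positivity) ENNReal.ofReal_ne_top).1 ?_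
  calc ENNReal.ofReal c * μ A
      ≤ ENNReal.ofReal c * μ.restrict s {x | ENNReal.ofReal c ≤ f x} := by
        rw [Measure.restrict_apply' hs]
        gcongr
        exact fun x hx => ⟨hfA x hx, hA hx⟩
    _ ≤ ∫⁻ x in s, f x ∂μ := mul_meas_ge_le_lintegral₀ hf _
    _ ≤ _ := hM.trans_eq (ENNReal.ofReal_mul hc.le)

lemma exists_le_not_of_setLIntegral_le {f : ℝ → ENNReal} {P : ℝ → Prop} {L m c : ℝ}
    (hc : 0 < c) (hm : m ∈ Ioo 0 L) (hf : ∫⁻ x in Ioo 0 L, f x ≤ ENNReal.ofReal (c * m))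
    (hP : ∀ x ∈ Ioo 0 L, P x → ENNReal.ofReal c ≤ f x)
    (hPm : P m → ∃ b > m, ∃ c' > 0, ∀ x ∈ Ioo m b, x ∈ Ioo 0 L ∧ ENNReal.ofReal c' ≤ f x) :
    ∃ x ∈ Ioo 0 L, x ≤ m ∧ ¬ P x := by
  by_contra! hall
  obtain ⟨b, hb, c', hc', hnear⟩ := hPm (hall m hm le_rfl)
  have hsplit := mul_measure_add_mul_measure_le_setLIntegral (μ := volume) (f := f)
    measurableSet_Ioc measurableSet_Ioo (Ioc_disjoint_Ioi_same.mono_right Ioo_subset_Ioi_self)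
    (union_subset (Ioc_subset_Ioo_right hm.2) fun x hx => (hnear x hx).1)
    (fun x hx => hP x ⟨hx.1, hx.2.trans_lt hm.2⟩ (hall x ⟨hx.1, hx.2.trans_lt hm.2⟩ hx.2))
    fun x hx => (hnear x hx).2
  rw [Real.volume_Ioc, Real.volume_Ioo, sub_zero, ← ENNReal.ofReal_mul hc.le,
    ← ENNReal.ofReal_mul hc'.le, ← ENNReal.ofReal_add (by nlinarith [hm.1])
      (by nlinarith [sub_pos.2 hb])] at hsplit
  have := (ENNReal.ofReal_le_ofReal_iff (by nlinarith [hm.1])).1 (hsplit.trans hf)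
  nlinarith [mul_pos hc' (sub_pos.2 hb)]

lemma sqrt_two_mul_mul_le {w x : ℝ} (hw : 0 ≤ w) :
    Real.sqrt (2 * w) * x ≤ 1 / 2 * x ^ 2 + w := by
  nlinarith [sq_nonneg (x - Real.sqrt (2 * w)), Real.sq_sqrt (by positivity : (0 : ℝ) ≤ 2 * w)]

lemma exists_mem_uIcc_forall_uIoo_lt {ψ : ℝ → ℝ} {t₀ t₁ ρ : ℝ}
    (hψ : ContinuousOn ψ (uIcc t₀ t₁)) (h₀ : ψ t₀ ≤ ρ) :
    ∃ p ∈ uIcc t₀ t₁, ψ p ≤ ρ ∧ ∀ t ∈ uIoo p t₁, ρ < ψ t := by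
  have hK : IsCompact (uIcc t₀ t₁ ∩ ψ ⁻¹' Iic ρ) :=
    isCompact_uIcc.of_isClosed_subset
      (hψ.preimage_isClosed_of_isClosed isCompact_uIcc.isClosed isClosed_Iic) inter_subset_left
  obtain ⟨p, ⟨hp, hpρ⟩, hmin⟩ := hK.exists_isMinOn ⟨t₀, left_mem_uIcc, h₀⟩
    (continuous_id.sub continuous_const).abs.continuousOn (f := fun t => |t - t₁|)
  refine ⟨p, hp, hpρ, fun t ht => not_le.1 fun htρ => ?_⟩
  have htK : t ∈ uIcc t₀ t₁ := ordConnected_uIcc.uIcc_subset hp right_mem_uIcc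
    (uIoo_subset_uIcc_self ht)
  have hle : |p - t₁| ≤ |t - t₁| := hmin ⟨htK, htρ⟩
  rcases le_total p t₁ with h | h
  · rw [uIoo_of_le h] at ht
    rw [abs_of_nonpos (by linarith), abs_of_nonpos (by linarith [ht.2])] at hle
    linarith [ht.1]
  · rw [uIoo_of_ge h] at ht
    rw [abs_of_nonneg (by linarith), abs_of_nonneg (by linarith [ht.1])] at hle
    linarith [ht.2]

section Curves

variable {E : Type*} [NormedAddCommGroup E] [NormedSpace ℝ E] [CompleteSpace E]

lemma ofReal_mul_norm_sub_le_setLIntegral {φ φ' : ℝ → E} {V : ℝ → ℝ} {w₀ p q : ℝ}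
    (hw₀ : 0 ≤ w₀) (hφ : ∀ t ∈ uIcc p q, HasDerivAt φ (φ' t) t)
    (hφ' : ContinuousOn φ' (uIcc p q)) (hV : ∀ t ∈ uIoo p q, w₀ ≤ V t) :
    ENNReal.ofReal (Real.sqrt (2 * w₀) * ‖φ q - φ p‖)
      ≤ ∫⁻ t in uIoo p q, ENNReal.ofReal (1 / 2 * ‖φ' t‖ ^ 2 + V t) := by
  have hint : IntegrableOn (fun t => ‖φ' t‖) (uIoo p q) :=
    (hφ'.norm.integrableOn_compact isCompact_uIcc).mono_set uIoo_subset_uIcc_self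
  have hftc : ‖φ q - φ p‖ ≤ ∫ t in uIoo p q, ‖φ' t‖ := by
    rw [← intervalIntegral.integral_eq_sub_of_hasDerivAt hφ hφ'.intervalIntegrable]
    exact intervalIntegral.norm_integral_le_integral_norm_uIoc.trans_eq
      integral_Ioc_eq_integral_Ioo
  calc ENNReal.ofReal (Real.sqrt (2 * w₀) * ‖φ q - φ p‖)
      ≤ ENNReal.ofReal (∫ t in uIoo p q, Real.sqrt (2 * w₀) * ‖φ' t‖) := by
        rw [integral_const_mul]
        gcongr
    _ = ∫⁻ t in uIoo p q, ENNReal.ofReal (Real.sqrt (2 * w₀) * ‖φ' t‖) :=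
        ofReal_integral_eq_lintegral_ofReal (hint.const_mul _)
          (Eventually.of_forall fun t => by positivity)
    _ ≤ _ := setLIntegral_mono' measurableSet_Ioo fun t ht =>
        ENNReal.ofReal_le_ofReal ((sqrt_two_mul_mul_le hw₀).trans (by linarith [hV t ht]))

lemma ofReal_min_le_setLIntegral {φ φ' : ℝ → E} {V : ℝ → ℝ} {a : E} {α β ρ w₀ t₁ : ℝ}
    (hw₀ : 0 ≤ w₀) (hφ : ∀ t ∈ Ioo α β, HasDerivAt φ (φ' t) t)
    (hφ' : ContinuousOn φ' (Ioo α β)) (hV : ∀ t ∈ Ioo α β, ρ ≤ ‖φ t - a‖ → w₀ ≤ V t)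
    (ht₁ : t₁ ∈ Ioo α β) :
    ENNReal.ofReal (min (Real.sqrt (2 * w₀) * (‖φ t₁ - a‖ - ρ)) (w₀ * (β - α)))
      ≤ ∫⁻ t in Ioo α β, ENNReal.ofReal (1 / 2 * ‖φ' t‖ ^ 2 + V t) := by
  by_cases hfar : ∀ t ∈ Ioo α β, ρ ≤ ‖φ t - a‖
  · calc ENNReal.ofReal (min _ _) ≤ ENNReal.ofReal w₀ * volume (Ioo α β) := by
          rw [Real.volume_Ioo, ← ENNReal.ofReal_mul hw₀]
          exact ENNReal.ofReal_le_ofReal (min_le_right _ _)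
      _ ≤ _ := mul_measure_le_setLIntegral measurableSet_Ioo fun t ht =>
          ENNReal.ofReal_le_ofReal (by nlinarith [hV t ht (hfar t ht)])
  push Not at hfar
  obtain ⟨t₀, ht₀, hnear⟩ := hfar
  have hsub : uIcc t₀ t₁ ⊆ Ioo α β := ordConnected_Ioo.uIcc_subset ht₀ ht₁
  have hφc : ContinuousOn φ (Ioo α β) := fun t ht => (hφ t ht).continuousAt.continuousWithinAt
  obtain ⟨p, hp, hpρ, hfar⟩ := exists_mem_uIcc_forall_uIoo_lt (ψ := fun t => ‖φ t - a‖)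
    ((hφc.mono hsub).sub continuousOn_const).norm hnear.le
  have hsub' : uIcc p t₁ ⊆ Ioo α β := ordConnected_Ioo.uIcc_subset (hsub hp) ht₁
  have hgap : ‖φ t₁ - a‖ - ρ ≤ ‖φ t₁ - φ p‖ := by
    have := norm_sub_norm_le (φ t₁ - a) (φ p - a)
    rw [sub_sub_sub_cancel_right] at this
    linarith
  calc ENNReal.ofReal (min _ _) ≤ ENNReal.ofReal (Real.sqrt (2 * w₀) * ‖φ t₁ - φ p‖) :=
        ENNReal.ofReal_le_ofReal ((min_le_left _ _).trans (by gcongr))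
    _ ≤ ∫⁻ t in uIoo p t₁, ENNReal.ofReal (1 / 2 * ‖φ' t‖ ^ 2 + V t) :=
        ofReal_mul_norm_sub_le_setLIntegral hw₀ (fun t ht => hφ t (hsub' ht)) (hφ'.mono hsub')
          fun t ht => hV t (hsub' (uIoo_subset_uIcc_self ht)) (hfar t ht).le
    _ ≤ _ := lintegral_mono_set (uIoo_subset_uIcc_self.trans hsub')

end Curves

def rectangle (s t : Set ℝ) : Set (EuclideanSpace ℝ (Fin 2)) := {x | x 0 ∈ s ∧ x 1 ∈ t}

@[fun_prop] lemma Continuous.mk2 {X : Type*} [TopologicalSpace X] {f g : X → ℝ}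
    (hf : Continuous f) (hg : Continuous g) : Continuous fun x => mk2 (f x) (g x) := by
  unfold _root_.mk2
  fun_prop

lemma hasDerivAt_mk2_right (x₁ t : ℝ) :
    HasDerivAt (mk2 x₁) (EuclideanSpace.single 1 1) t := by
  have hline : mk2 x₁ = fun s => mk2 x₁ 0 + s • EuclideanSpace.single 1 1 := by
    ext s i
    fin_cases i <;> simp [mk2]
  rw [hline]
  simpa using ((hasDerivAt_id t).smul_const (EuclideanSpace.single (1 : Fin 2) (1 : ℝ))).const_add
    (mk2 x₁ 0)

lemma isOpen_rectangle {s t : Set ℝ} (hs : IsOpen s) (ht : IsOpen t) :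
    IsOpen (rectangle s t) :=
  (hs.preimage (EuclideanSpace.proj 0).continuous).inter
    (ht.preimage (EuclideanSpace.proj 1).continuous)

lemma convex_rectangle {s t : Set ℝ} (hs : Convex ℝ s) (ht : Convex ℝ t) :
    Convex ℝ (rectangle s t) :=
  (hs.linear_preimage (EuclideanSpace.proj (0 : Fin 2) : _ →L[ℝ] ℝ).toLinearMap).inter
    (ht.linear_preimage (EuclideanSpace.proj (1 : Fin 2) : _ →L[ℝ] ℝ).toLinearMap)

lemma isBounded_rectangle {s t : Set ℝ} (hs : Bornology.IsBounded s)
    (ht : Bornology.IsBounded t) : Bornology.IsBounded (rectangle s t) := by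
  rw [Bornology.isBounded_induced, ← Bornology.forall_isBounded_image_eval_iff]
  intro i
  fin_cases i
  · exact hs.subset (by rintro _ ⟨_, ⟨x, hx, rfl⟩, rfl⟩; exact hx.1)
  · exact ht.subset (by rintro _ ⟨_, ⟨x, hx, rfl⟩, rfl⟩; exact hx.2)

noncomputable def mk2Equiv : ℝ × ℝ ≃ᵐ EuclideanSpace ℝ (Fin 2) :=
  MeasurableEquiv.finTwoArrow.symm.trans (MeasurableEquiv.toLp 2 (Fin 2 → ℝ))

lemma measurePreserving_mk2Equiv (s t : Set ℝ) :
    MeasurePreserving mk2Equiv ((volume.restrict s).prod (volume.restrict t))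
      (volume.restrict (rectangle s t)) := by
  have h : MeasurePreserving mk2Equiv.symm volume volume :=
    (volume_preserving_finTwoArrow ℝ).comp
      (EuclideanSpace.volume_preserving_symm_measurableEquiv_toLp (Fin 2))
  rw [Measure.prod_restrict, ← Measure.volume_eq_prod]
  exact (h.restrict_preimage_emb mk2Equiv.symm.measurableEmbedding (s ×ˢ t)).symm _

lemma setLIntegral_rectangle {s t : Set ℝ} {F : EuclideanSpace ℝ (Fin 2) → ENNReal}
    (hF : AEMeasurable F (volume.restrict (rectangle s t))) :
    ∫⁻ x in rectangle s t, F x = ∫⁻ x₁ in s, ∫⁻ x₂ in t, F (mk2 x₁ x₂) := by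
  have h := measurePreserving_mk2Equiv s t
  rw [← h.lintegral_comp_emb mk2Equiv.measurableEmbedding F]
  exact lintegral_prod (F ∘ mk2Equiv) (hF.comp_quasiMeasurePreserving h.quasiMeasurePreserving)

lemma aemeasurable_setLIntegral_mk2 {s t : Set ℝ} {F : EuclideanSpace ℝ (Fin 2) → ENNReal}
    (hF : AEMeasurable F (volume.restrict (rectangle s t))) :
    AEMeasurable (fun x₁ => ∫⁻ x₂ in t, F (mk2 x₁ x₂)) (volume.restrict s) :=
  (hF.comp_quasiMeasurePreserving
    (measurePreserving_mk2Equiv s t).quasiMeasurePreserving).lintegral_prod_right'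

lemma exists_gt_forall_Ioo_lt_norm_sub {F : Type*} [NormedAddCommGroup F]
    {u : EuclideanSpace ℝ (Fin 2) → F} {Ω : Set (EuclideanSpace ℝ (Fin 2))} {a : F}
    {c x₁ x₂ : ℝ} (hΩ : IsOpen Ω) (hu : ContinuousOn u Ω) (hx : mk2 x₁ x₂ ∈ Ω)
    (hc : c < ‖u (mk2 x₁ x₂) - a‖) :
    ∃ b > x₁, ∀ y ∈ Ioo x₁ b, mk2 y x₂ ∈ Ω ∧ c < ‖u (mk2 y x₂) - a‖ := by
  have hmk : Continuous fun y => mk2 y x₂ := by fun_prop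
  have hcont : ContinuousAt (fun y => ‖u (mk2 y x₂) - a‖) x₁ :=
    (((hu.continuousAt (hΩ.mem_nhds hx)).comp (f := fun y => mk2 y x₂)
      hmk.continuousAt).sub continuousAt_const).norm
  have hev : {y | mk2 y x₂ ∈ Ω ∧ c < ‖u (mk2 y x₂) - a‖} ∈ 𝓝 x₁ :=
    inter_mem (hmk.continuousAt.preimage_mem_nhds (hΩ.mem_nhds hx))
      (hcont.eventually (lt_mem_nhds hc))
  obtain ⟨l, b, ⟨hl, hb⟩, hsub⟩ := mem_nhds_iff_exists_Ioo_subset.1 hev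
  exact ⟨b, hb, fun y hy => hsub ⟨hl.trans hy.1, hy.2⟩⟩

lemma continuous_hsNorm {n m : ℕ} :
    Continuous (hsNorm : (EuclideanSpace ℝ (Fin n) →L[ℝ] EuclideanSpace ℝ (Fin m)) → ℝ) :=
  Real.continuous_sqrt.comp <| continuous_finsetSum _ fun i _ =>
    ((ContinuousLinearMap.apply ℝ _ (EuclideanSpace.single i 1)).continuous.norm.pow 2)

lemma sq_norm_apply_single_le_sq_hsNorm {n m : ℕ}
    (L : EuclideanSpace ℝ (Fin n) →L[ℝ] EuclideanSpace ℝ (Fin m)) (i : Fin n) :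
    ‖L (EuclideanSpace.single i 1)‖ ^ 2 ≤ hsNorm L ^ 2 := by
  rw [hsNorm, Real.sq_sqrt (by positivity)]
  exact Finset.single_le_sum (f := fun j => ‖L (EuclideanSpace.single j 1)‖ ^ 2)
    (fun j _ => by positivity) (Finset.mem_univ i)

section Energy

variable {n m : ℕ} {Ω : Set (EuclideanSpace ℝ (Fin n))} {W : EuclideanSpace ℝ (Fin m) → ℝ}
  {u : EuclideanSpace ℝ (Fin n) → EuclideanSpace ℝ (Fin m)}

lemma integrableOn_energy_integrand (hΩ : IsOpen Ω) (hbdd : Bornology.IsBounded Ω)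
    (hconv : Convex ℝ Ω) (hne : Ω.Nonempty) (hW : Continuous W)
    (hu : ContDiffOn ℝ 1 u (closure Ω)) :
    IntegrableOn (fun x => (1 / 2 : ℝ) * hsNorm (fderiv ℝ u x) ^ 2 + W (u x)) Ω := by
  have hud : UniqueDiffOn ℝ (closure Ω) :=
    uniqueDiffOn_convex hconv.closure (hne.mono (interior_maximal subset_closure hΩ))
  have hcont : ContinuousOn
      (fun x => (1 / 2 : ℝ) * hsNorm (fderivWithin ℝ u (closure Ω) x) ^ 2 + W (u x))
      (closure Ω) :=
    (continuousOn_const.mul ((continuous_hsNorm.comp_continuousOn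
      (hu.continuousOn_fderivWithin hud le_rfl)).pow 2)).add (hW.comp_continuousOn hu.continuousOn)
  refine ((hcont.integrableOn_compact hbdd.isCompact_closure).mono_set subset_closure).congr_fun
    (fun x hx => ?_) hΩ.measurableSet
  simp only [fderivWithin_of_mem_nhds (mem_of_superset (hΩ.mem_nhds hx) subset_closure)]

lemma ofReal_energy_eq_setLIntegral (hW : ∀ v, 0 ≤ W v)
    (hint : IntegrableOn (fun x => (1 / 2 : ℝ) * hsNorm (fderiv ℝ u x) ^ 2 + W (u x)) Ω) :
    ENNReal.ofReal (energy Ω W u)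
      = ∫⁻ x in Ω, ENNReal.ofReal ((1 / 2 : ℝ) * hsNorm (fderiv ℝ u x) ^ 2 + W (u x)) :=
  ofReal_integral_eq_lintegral_ofReal hint
    (Eventually.of_forall fun x => add_nonneg (by positivity) (hW (u x)))

end Energy

noncomputable def columnEnergy {F : Type*} [NormedAddCommGroup F] [NormedSpace ℝ F]
    (W : F → ℝ) (u : EuclideanSpace ℝ (Fin 2) → F) (R x₁ : ℝ) : ENNReal :=
  ∫⁻ x₂ in Ioo (-R) R, ENNReal.ofReal
    (1 / 2 * ‖fderiv ℝ u (mk2 x₁ x₂) (EuclideanSpace.single 1 1)‖ ^ 2 + W (u (mk2 x₁ x₂)))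

section Columns

variable {m : ℕ} {W : EuclideanSpace ℝ (Fin m) → ℝ}
  {u : EuclideanSpace ℝ (Fin 2) → EuclideanSpace ℝ (Fin m)} {L R : ℝ}

lemma aemeasurable_columnEnergy_integrand {Ω : Set (EuclideanSpace ℝ (Fin 2))}
    (hΩ : IsOpen Ω) (hW : Continuous W) (hu : ContDiffOn ℝ 1 u Ω) :
    AEMeasurable (fun x => ENNReal.ofReal
      (1 / 2 * ‖fderiv ℝ u x (EuclideanSpace.single 1 1)‖ ^ 2 + W (u x))) (volume.restrict Ω) :=
  (((continuousOn_const.mul (((hu.continuousOn_fderiv_of_isOpen hΩ le_rfl).clm_apply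
    continuousOn_const).norm.pow 2)).add (hW.comp_continuousOn hu.continuousOn)).aemeasurable
      hΩ.measurableSet).ennreal_ofReal

lemma aemeasurable_columnEnergy (hW : Continuous W)
    (hu : ContDiffOn ℝ 1 u (rectangle (Ioo 0 L) (Ioo (-R) R))) :
    AEMeasurable (columnEnergy W u R) (volume.restrict (Ioo 0 L)) :=
  aemeasurable_setLIntegral_mk2
    (aemeasurable_columnEnergy_integrand (isOpen_rectangle isOpen_Ioo isOpen_Ioo) hW hu)

lemma setLIntegral_columnEnergy_le_energy (hL : 0 < L) (hR : 0 < R) (hW : Continuous W)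
    (hW₀ : ∀ v, 0 ≤ W v) (hu : ContDiffOn ℝ 1 u (closure (rectangle (Ioo 0 L) (Ioo (-R) R)))) :
    ∫⁻ x₁ in Ioo 0 L, columnEnergy W u R x₁
      ≤ ENNReal.ofReal (energy (rectangle (Ioo 0 L) (Ioo (-R) R)) W u) := by
  have hΩ : IsOpen (rectangle (Ioo 0 L) (Ioo (-R) R)) := isOpen_rectangle isOpen_Ioo isOpen_Ioo
  have hint := integrableOn_energy_integrand hΩ
    (isBounded_rectangle (Metric.isBounded_Ioo _ _) (Metric.isBounded_Ioo _ _))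
    (convex_rectangle (convex_Ioo _ _) (convex_Ioo _ _))
    ⟨mk2 (L / 2) 0, show L / 2 ∈ Ioo 0 L ∧ (0 : ℝ) ∈ Ioo (-R) R from
      ⟨⟨by positivity, by linarith⟩, by linarith, hR⟩⟩ hW hu
  rw [ofReal_energy_eq_setLIntegral hW₀ hint]
  calc ∫⁻ x₁ in Ioo 0 L, columnEnergy W u R x₁
      = ∫⁻ x in rectangle (Ioo 0 L) (Ioo (-R) R), ENNReal.ofReal
          (1 / 2 * ‖fderiv ℝ u x (EuclideanSpace.single 1 1)‖ ^ 2 + W (u x)) :=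
        (setLIntegral_rectangle (aemeasurable_columnEnergy_integrand hΩ hW
          (hu.mono subset_closure))).symm
    _ ≤ _ := lintegral_mono fun x => ENNReal.ofReal_le_ofReal <| by
        linarith [sq_norm_apply_single_le_sq_hsNorm (fderiv ℝ u x) 1]

end Columns

lemma ofReal_mul_le_columnEnergy {a : EuclideanSpace ℝ (Fin 2)}
    {W : EuclideanSpace ℝ (Fin 2) → ℝ} {u : EuclideanSpace ℝ (Fin 2) → EuclideanSpace ℝ (Fin 2)}
    {r w₀ L R d x₁ x₂ : ℝ} (hw₀ : 0 < w₀) (hR : r / (4 * Real.sqrt (2 * w₀)) ≤ R)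
    (hd : d ≤ r / 4) (hWlb : ∀ v : EuclideanSpace ℝ (Fin 2), 0 ≤ v 0 → r / 4 ≤ ‖v - a‖ → w₀ ≤ W v)
    (hu : ContDiffOn ℝ 1 u (rectangle (Ioo 0 L) (Ioo (-R) R)))
    (hpos : ∀ x ∈ rectangle (Ioo 0 L) (Ioo (-R) R), 0 ≤ u x 0)
    (hx₁ : x₁ ∈ Ioo 0 L) (hx₂ : x₂ ∈ Ioo (-R) R) (hdev : r / 4 + d ≤ ‖u (mk2 x₁ x₂) - a‖) :
    ENNReal.ofReal (Real.sqrt (2 * w₀) * d) ≤ columnEnergy W u R x₁ := by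
  have hΩ : IsOpen (rectangle (Ioo 0 L) (Ioo (-R) R)) := isOpen_rectangle isOpen_Ioo isOpen_Ioo
  have hsqrt : 0 < Real.sqrt (2 * w₀) := by positivity
  have hlong : Real.sqrt (2 * w₀) * (r / 4) ≤ w₀ * (R - -R) := by
    rw [div_le_iff₀ (by positivity)] at hR
    calc Real.sqrt (2 * w₀) * (r / 4)
        ≤ Real.sqrt (2 * w₀) * (R * (4 * Real.sqrt (2 * w₀))) / 4 := by
          rw [mul_div_assoc]
          gcongr
      _ = w₀ * (R - -R) := by
          linear_combination R * Real.mul_self_sqrt (by positivity : (0 : ℝ) ≤ 2 * w₀)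
  refine (ENNReal.ofReal_le_ofReal (le_min ?_ ?_)).trans
    (ofReal_min_le_setLIntegral (ρ := r / 4) (V := fun t => W (u (mk2 x₁ t))) hw₀.le
      (fun t ht => ?_) ?_ (fun t ht => hWlb _ (hpos _ ⟨hx₁, ht⟩)) hx₂)
  · gcongr
    linarith
  · exact (mul_le_mul_of_nonneg_left hd hsqrt.le).trans hlong
  · exact ((hu.differentiableOn one_ne_zero _ ⟨hx₁, ht⟩).differentiableAt
      (hΩ.mem_nhds ⟨hx₁, ht⟩)).hasFDerivAt.comp_hasDerivAt t (hasDerivAt_mk2_right x₁ t)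
  · exact ((hu.continuousOn_fderiv_of_isOpen hΩ le_rfl).comp
      (by fun_prop : Continuous fun t => mk2 x₁ t).continuousOn
      fun t ht => ⟨hx₁, ht⟩).clm_apply continuousOn_const

theorem bad_set_measure_bound
    (a : EuclideanSpace ℝ (Fin 2)) (r C w₀ μ R : ℝ)
    (hr : 0 < r) (hC : 0 < C) (hw₀ : 0 < w₀) (hμ : 0 < μ) (hR : 0 < R)
    (W : EuclideanSpace ℝ (Fin 2) → ℝ)
    (hWcont : Continuous W) (hWnonneg : ∀ v, 0 ≤ W v)
    (hWlb : ∀ v : EuclideanSpace ℝ (Fin 2), 0 ≤ v 0 → r / 4 ≤ ‖v - a‖ → w₀ ≤ W v)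
    (Ω : Set (EuclideanSpace ℝ (Fin 2)))
    (hΩ : Ω = {x | x 0 ∈ Set.Ioo 0 (μ * R) ∧ x 1 ∈ Set.Ioo (-R) R})
    (u : EuclideanSpace ℝ (Fin 2) → EuclideanSpace ℝ (Fin 2))
    (huC1 : ContDiffOn ℝ 1 u (closure Ω))
    (hpos : ∀ x ∈ Ω, 0 ≤ u x 0)
    (hen : energy Ω W u ≤ C * R)
    (iR : Set ℝ)
    (hiR : iR = {x₁ ∈ Set.Ioo 0 (μ * R) |
      ∃ x₂ ∈ Set.Ioo (-R) R, r / 2 ≤ ‖u (mk2 x₁ x₂) - a‖}) :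
    (r / (4 * Real.sqrt (2 * w₀)) ≤ R →
      volume iR ≤ ENNReal.ofReal (2 * Real.sqrt 2 * C * R / (r * Real.sqrt w₀))) ∧
    (r / (4 * Real.sqrt (2 * w₀)) ≤ R →
      2 * Real.sqrt 2 * C / (r * Real.sqrt w₀) < μ →
      ∃ x₁ ∈ Set.Ioo 0 (μ * R),
        x₁ ≤ 2 * Real.sqrt 2 * C / (r * Real.sqrt w₀) * R ∧
        ∀ x₂ ∈ Set.Ioo (-R) R, ‖u (mk2 x₁ x₂) - a‖ < r / 2) := by
  obtain rfl : Ω = rectangle (Ioo 0 (μ * R)) (Ioo (-R) R) := hΩ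
  subst hiR
  set η := 2 * Real.sqrt 2 * C / (r * Real.sqrt w₀) with hη
  have hκη : Real.sqrt (2 * w₀) * (r / 4) * (η * R) = C * R := by
    rw [hη, Real.sqrt_mul (by norm_num)]
    field_simp
    rw [Real.sq_sqrt (by norm_num)]
    ring
  have hu := huC1.mono subset_closure
  have htotal : ∫⁻ x₁ in Ioo 0 (μ * R), columnEnergy W u R x₁
      ≤ ENNReal.ofReal (Real.sqrt (2 * w₀) * (r / 4) * (η * R)) :=
    (setLIntegral_columnEnergy_le_energy (by positivity) hR hWcont hWnonneg huC1).trans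
      (ENNReal.ofReal_le_ofReal (hκη ▸ hen))
  have hbad : r / (4 * Real.sqrt (2 * w₀)) ≤ R → ∀ x₁ ∈ Ioo 0 (μ * R),
      (∃ x₂ ∈ Ioo (-R) R, r / 2 ≤ ‖u (mk2 x₁ x₂) - a‖) →
        ENNReal.ofReal (Real.sqrt (2 * w₀) * (r / 4)) ≤ columnEnergy W u R x₁ :=
    fun hR₀ x₁ hx₁ ⟨x₂, hx₂, hdev⟩ =>
      ofReal_mul_le_columnEnergy hw₀ hR₀ le_rfl hWlb hu hpos hx₁ hx₂ (by linarith)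
  refine ⟨fun hR₀ => ?_, fun hR₀ hημ => ?_⟩
  · rw [show 2 * Real.sqrt 2 * C * R / (r * Real.sqrt w₀) = η * R by ring]
    exact measure_le_of_le_setLIntegral measurableSet_Ioo (aemeasurable_columnEnergy hWcont hu)
      (by positivity) (sep_subset _ _) (fun x₁ hx₁ => hbad hR₀ x₁ hx₁.1 hx₁.2) htotal
  · have hηR : η * R ∈ Ioo 0 (μ * R) := ⟨by positivity, by gcongr⟩
    refine (exists_le_not_of_setLIntegral_le (by positivity) hηR htotal (hbad hR₀)
      fun ⟨x₂, hx₂, hdev⟩ => ?_).imp fun x₁ ⟨hx₁, hle, hgood⟩ =>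
        ⟨hx₁, hle, fun x₂ hx₂ => not_le.1 fun hdev => hgood ⟨x₂, hx₂, hdev⟩⟩
    obtain ⟨b, hb, hnear⟩ := exists_gt_forall_Ioo_lt_norm_sub (a := a)
      (isOpen_rectangle isOpen_Ioo isOpen_Ioo) hu.continuousOn ⟨hηR, hx₂⟩
      (show r / 4 + r / 8 < _ by linarith)
    exact ⟨b, hb, _, by positivity, fun y hy => ⟨(hnear y hy).1.1,
      ofReal_mul_le_columnEnergy hw₀ hR₀ (by linarith) hWlb hu hpos (hnear y hy).1.1 hx₂
        (hnear y hy).2.le⟩⟩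
end
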